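/- For every a ∈ ℤ/Mℤ, #{(i, j) ∈ T_2 × T_2 : i − j = a} − #{(i, j) ∈ T_3 × T_2 : i − j = a} equals 2^{2s−1}·[a = 0] + 2^{s−1}·(1 − [a ∈ T_1]), where [P] is 1 if P holds and 0 otherwise; that is, (T_2 − T_3)·T_2^{(−1)} = 2^{2s−1} + 2^{s−1}(ℤ/Mℤ − T_1) in the group ring ℤ[ℤ/Mℤ]. -/

import Mathlib

noncomputable section

open scoped BigOperators

/-- `M = 2^{2s} + 2^s + 1`. -/
abbrev Mof (s : ℕ) : ℕ := 2 ^ (2 * s) + 2 ^ s + 1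

/-- The relative trace from `F` (of order `2^{3s}`) to its subfield `E` of order `2^s`:
`Tr_{F/E}(x) = x + x^{2^s} + x^{2^{2s}}`, viewed as a map `F → F`. -/
def trFE {F : Type*} [Field F] (s : ℕ) (x : F) : F :=
  x + x ^ (2 ^ s) + x ^ (2 ^ (2 * s))

/-- `ψ(x) = 1` if the absolute trace `Tr_{F/𝔽₂}(x) = 0`, and `-1` otherwise. -/
def psi (F : Type*) [Field F] [Algebra (ZMod 2) F] (x : F) : ℤ :=
  if Algebra.trace (ZMod 2) F x = 0 then 1 else -1

/-- `ψ(cS) = ∑_{x ∈ S} ψ(c·x)`. -/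
def psiSum (F : Type*) [Field F] [Algebra (ZMod 2) F] (c : F) (S : Set F) : ℤ :=
  ∑ᶠ x ∈ S, psi F (c * x)

/-- `D = {u ∈ F^× : Tr_{F/E}(u⁻¹) = 0}`. -/
def Dset (F : Type*) [Field F] (s : ℕ) : Set F :=
  {u | u ≠ 0 ∧ trFE s u⁻¹ = 0}

/-- `S_a = {u ∈ F^× : Tr_{F/E}(u^{2^s+1}) = 0 ∧ Tr_{F/E}(ω^a u) = 0}`. -/
def Sa {F : Type*} [Field F] (s : ℕ) (ω : F) (a : ℤ) : Set F :=
  {u | u ≠ 0 ∧ trFE s (u ^ (2 ^ s + 1)) = 0 ∧ trFE s (ω ^ a * u) = 0}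

/-- `T₁ ⊆ ℤ/Mℤ`: classes `a` with `|S_a| = 2^s - 1`. -/
def T1 {F : Type*} [Field F] (s : ℕ) (ω : F) : Set (ZMod (Mof s)) :=
  {x | (Sa s ω (x.val : ℤ)).ncard = 2 ^ s - 1}

/-- `T₂ ⊆ ℤ/Mℤ`: classes `a` with `|S_a| = 2(2^s - 1)`. -/
def T2 {F : Type*} [Field F] (s : ℕ) (ω : F) : Set (ZMod (Mof s)) :=
  {x | (Sa s ω (x.val : ℤ)).ncard = 2 * (2 ^ s - 1)}

/-- `T₃ ⊆ ℤ/Mℤ`: classes `a` with `|S_a| = 0`. -/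
def T3 {F : Type*} [Field F] (s : ℕ) (ω : F) : Set (ZMod (Mof s)) :=
  {x | (Sa s ω (x.val : ℤ)).ncard = 0}

/-- The cyclotomic class `C_i^{(M,K)} = {g^{i+Mt} : t ∈ ℤ}`. -/
def cyc {K : Type*} [Field K] (M : ℕ) (g : K) (i : ℤ) : Set K :=
  {x | ∃ t : ℤ, x = g ^ (i + (M : ℤ) * t)}

/-- `⋃_{i ∈ T} C_i^{(M,K)}` for a set `T ⊆ ℤ/Mℤ` of indices. -/
def Rclass {K : Type*} [Field K] (s : ℕ) (g : K) (T : Set (ZMod (Mof s))) : Set K :=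
  ⋃ i ∈ T, cyc (Mof s) g ((i.val : ℤ))

/-- The family `R_0 = {0}`, `R_k = ⋃_{i ∈ T_k} C_i^{(M,K)}`, `k = 1, 2, 3`. -/
def Rfam {F K : Type*} [Field F] [Field K] (s : ℕ) (ω : F) (g : K) : Fin 4 → Set K :=
  ![{0}, Rclass s g (T1 s ω), Rclass s g (T2 s ω), Rclass s g (T3 s ω)]

/-- Indicator `[P] = 1` if `P` holds, `0` otherwise. -/
def Ind (P : Prop) : ℤ := @ite ℤ P (Classical.propDecidable P) 1 0

/-!
Write `q = 2^s`, `G = ℤ/Mℤ` and `D = {c ∈ G | Tr(ω^c) = 0}` (the Singer set). The kernel of `Tr`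
is a 2-dimensional `E`-subspace of the 3-dimensional `E`-space `F`, and for `z ∉ E` the subspaces
`ker Tr` and `z⁻¹ ker Tr` are distinct, hence meet in a line. Since `P(ω^n)` depends only on
`n mod M` for every `E^×`-invariant `P`, counting the nonzero points of these subspaces shows
that `D` is a planar difference set with `q + 1` elements, stable under doubling because
`Tr(x²) = Tr(x)²`. As `q + 1 ≡ -q²` mod `M`, we get `|S_a| = (q - 1) ρ(a)` with
`ρ(a) = #{d ∈ D | a - d ∈ D}`, so `T₁, T₂, T₃` are the level sets `ρ = 1, 2, 0`; planarity
forces `ρ ≤ 2`, with `ρ = 1` exactly on `D`. Then `2·1_{T₂} = ρ - 1_D` and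
`1_{T₂} - 1_{T₃} = ρ - 1`, and the claim reduces to the correlations `∑ ρ(j) ρ(a + j)` and
`∑_{j ∈ D} ρ(a + j)`, both computed from `D D^{(-1)} = q + G`.
-/

open Finset Polynomial

section PlanarDifferenceSet

variable {G : Type*} [AddCommGroup G] [DecidableEq G] (D : Finset G)

def sumRep (x : G) : ℕ := #{d ∈ D | x - d ∈ D}

def IsPlanarDifferenceSet : Prop := ∀ v ≠ 0, #{d ∈ D | v + d ∈ D} = 1

lemma sum_sumRep_mul [Fintype G] (g : G → ℤ) :
    ∑ x, (sumRep D x : ℤ) * g x = ∑ d ∈ D, ∑ e ∈ D, g (d + e) := by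
  simp only [sumRep, card_filter, Nat.cast_sum, sum_mul]
  rw [sum_comm]
  refine sum_congr rfl fun d _ => ?_
  rw [← Fintype.sum_equiv (Equiv.addLeft d) (fun e => if e ∈ D then g (d + e) else 0) _
    (fun e => by simp), sum_ite_mem, univ_inter]

lemma sum_sumRep [Fintype G] : ∑ x, (sumRep D x : ℤ) = #D ^ 2 := by
  simpa [sq] using sum_sumRep_mul D 1

lemma sum_sumRep_mul_sumRep [Fintype G] (a : G) :
    ∑ x, (sumRep D x : ℤ) * sumRep D (a + x) =
      ∑ e ∈ D, ∑ c ∈ D, (#{d ∈ D | a + e - c + d ∈ D} : ℤ) := by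
  rw [sum_sumRep_mul]
  simp only [sumRep, card_filter, Nat.cast_sum]
  rw [sum_comm]
  refine sum_congr rfl fun e _ => ?_
  rw [sum_comm]
  refine sum_congr rfl fun c _ => sum_congr rfl fun d _ => ?_
  rw [show a + (d + e) - c = a + e - c + d by abel]

lemma sum_sumRep_add (a : G) :
    ∑ e ∈ D, (sumRep D (a + e) : ℤ) = ∑ c ∈ D, (#{d ∈ D | a - c + d ∈ D} : ℤ) := by
  simp only [sumRep, card_filter, Nat.cast_sum]
  rw [sum_comm]
  refine sum_congr rfl fun c _ => sum_congr rfl fun e _ => ?_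
  rw [show a + e - c = a - c + e by abel]

namespace IsPlanarDifferenceSet

variable {D} (hD : IsPlanarDifferenceSet D)
include hD

lemma card_filter_add_mem (v : G) :
    #{d ∈ D | v + d ∈ D} = if v = 0 then #D else 1 := by
  split_ifs with hv
  · simp [hv]
  · exact hD v hv

lemma sum_card_filter_sub_add_mem {q : ℕ} (hcard : #D = q + 1) (w : G) :
    ∑ c ∈ D, (#{d ∈ D | w - c + d ∈ D} : ℤ) =
      q + 1 + if w ∈ D then (q : ℤ) else 0 := by
  have h : ∀ c, (#{d ∈ D | w - c + d ∈ D} : ℤ) = 1 + if w = c then (q : ℤ) else 0 := by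
    intro c
    simp only [hD.card_filter_add_mem, sub_eq_zero, hcard]
    split_ifs <;> simp [add_comm]
  simp only [h, sum_add_distrib, sum_ite_eq, sum_const, hcard]
  ring

lemma sum_sumRep_mul_sumRep_eq [Fintype G] {q : ℕ} (hcard : #D = q + 1) (a : G) :
    ∑ x, (sumRep D x : ℤ) * sumRep D (a + x) =
      (q + 1) ^ 2 + q + if a = 0 then (q : ℤ) ^ 2 else 0 := by
  rw [sum_sumRep_mul_sumRep]
  simp only [hD.sum_card_filter_sub_add_mem hcard]
  simp only [sum_add_distrib, sum_const, hcard, ← sum_filter, hD.card_filter_add_mem]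
  split_ifs <;> ring

lemma sum_sumRep_add_eq {q : ℕ} (hcard : #D = q + 1) (a : G) :
    ∑ e ∈ D, (sumRep D (a + e) : ℤ) = q + 1 + if a ∈ D then (q : ℤ) else 0 := by
  rw [sum_sumRep_add, hD.sum_card_filter_sub_add_mem hcard]

lemma filter_sub_mem_subset {x d : G} (hd : d ∈ D) (hxd : x - d ∈ D) :
    {e ∈ D | x - e ∈ D} ⊆ {d, x - d} := by
  intro e he
  rw [mem_filter] at he
  rw [mem_insert, mem_singleton]
  by_contra! hne
  have hv : e - (x - d) ≠ 0 := sub_ne_zero.mpr hne.2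
  have h1 : x - d ∈ ({f ∈ D | e - (x - d) + f ∈ D} : Finset G) := by
    simp only [mem_filter, sub_add_cancel]; exact ⟨hxd, he.1⟩
  have h2 : x - e ∈ ({f ∈ D | e - (x - d) + f ∈ D} : Finset G) := by
    simp only [mem_filter]; exact ⟨he.2, by convert hd using 1; abel⟩
  exact hne.1 (sub_right_injective (card_le_one.mp (hD _ hv).le _ h1 _ h2)).symm

lemma sumRep_le_two (x : G) : sumRep D x ≤ 2 := by
  obtain h | ⟨d, hd⟩ := ({e ∈ D | x - e ∈ D} : Finset G).eq_empty_or_nonempty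
  · simp [sumRep, h]
  · rw [mem_filter] at hd
    exact (card_le_card (hD.filter_sub_mem_subset hd.1 hd.2)).trans (card_le_two)

lemma sumRep_eq_one_iff (x : G) : sumRep D x = 1 ↔ ∃ d ∈ D, d + d = x := by
  constructor
  · intro h
    obtain ⟨d, hd⟩ := card_eq_one.mp h
    have hmem : d ∈ ({e ∈ D | x - e ∈ D} : Finset G) := hd ▸ mem_singleton_self d
    rw [mem_filter] at hmem
    have hxd : x - d ∈ ({e ∈ D | x - e ∈ D} : Finset G) := by
      simp only [mem_filter, sub_sub_cancel]; exact ⟨hmem.2, hmem.1⟩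
    rw [hd, mem_singleton] at hxd
    exact ⟨d, hmem.1, (eq_add_of_sub_eq hxd).symm⟩
  · rintro ⟨d, hd, rfl⟩
    refine card_eq_one.mpr ⟨d, subset_antisymm ?_ ?_⟩
    · simpa using hD.filter_sub_mem_subset (x := d + d) hd (by simpa using hd)
    · simpa using hd

lemma sumRep_eq_one_iff_mem (hdouble : ∀ x : G, x + x ∈ D ↔ x ∈ D)
    (hhalf : ∀ x : G, ∃ y, y + y = x) (x : G) : sumRep D x = 1 ↔ x ∈ D := by
  rw [hD.sumRep_eq_one_iff]
  constructor
  · rintro ⟨d, hd, rfl⟩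
    exact (hdouble d).mpr hd
  · intro hx
    obtain ⟨y, rfl⟩ := hhalf x
    exact ⟨y, (hdouble y).mp hx, rfl⟩

theorem two_mul_card_sub_card [Fintype G] {q : ℕ} (hcard : #D = q + 1)
    (hdouble : ∀ x : G, x + x ∈ D ↔ x ∈ D) (hhalf : ∀ x : G, ∃ y, y + y = x) (a : G) :
    2 * ((#{x | sumRep D x = 2 ∧ sumRep D (a + x) = 2} : ℤ) -
        #{x | sumRep D x = 2 ∧ sumRep D (a + x) = 0}) =
      (if a = 0 then (q : ℤ) ^ 2 else 0) + q - if a ∈ D then (q : ℤ) else 0 := by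
  have hvalues : ∀ x, (2 * if sumRep D x = 2 then 1 else 0 : ℤ) =
        sumRep D x - (if x ∈ D then 1 else 0) ∧
      ((if sumRep D x = 2 then 1 else 0) - if sumRep D x = 0 then 1 else 0 : ℤ) =
        sumRep D x - 1 := by
    intro x
    have h1 := hD.sumRep_eq_one_iff_mem hdouble hhalf x
    have h2 := hD.sumRep_le_two x
    interval_cases sumRep D x <;> simp_all
  calc _ = ∑ x, ((sumRep D x : ℤ) - if x ∈ D then 1 else 0) *
        ((sumRep D (a + x) : ℤ) - 1) := by
        simp only [card_filter, ite_and, Nat.cast_sum, ← sum_sub_distrib, mul_sum]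
        refine sum_congr rfl fun x _ => ?_
        rw [← (hvalues x).1, ← (hvalues (a + x)).2]
        split_ifs <;> simp
    _ = ∑ x, (sumRep D x : ℤ) * sumRep D (a + x) - ∑ x ∈ D, (sumRep D (a + x) : ℤ) -
          ∑ x, (sumRep D x : ℤ) + #D := by
        simp only [sub_mul, mul_sub, sum_sub_distrib, mul_one, ite_mul, one_mul, zero_mul,
          sum_ite_mem, univ_inter, sum_const, nsmul_one]
        ring
    _ = _ := by
        rw [hD.sum_sumRep_mul_sumRep_eq hcard, hD.sum_sumRep_add_eq hcard, sum_sumRep, hcard]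
        split_ifs <;> push_cast <;> ring

end IsPlanarDifferenceSet

end PlanarDifferenceSet

lemma Polynomial.ncard_le_natDegree {K : Type*} [CommRing K] [IsDomain K] {p : K[X]} (hp : p ≠ 0)
    {S : Set K} (hS : ∀ x ∈ S, p.IsRoot x) : S.ncard ≤ p.natDegree := by
  classical
  calc S.ncard ≤ (p.roots.toFinset : Set K).ncard :=
        Set.ncard_le_ncard (fun x hx => by simpa [hp] using hS x hx) (Finset.finite_toSet _)
    _ ≤ p.roots.card := (Set.ncard_coe_finset _).trans_le (Multiset.toFinset_card_le _)
    _ ≤ p.natDegree := card_roots' p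

section RelativeTrace

variable {F : Type*} [Field F] [CharP F 2] (s : ℕ)

def frobFixed (F : Type*) [Field F] [CharP F 2] (s : ℕ) : Subfield F :=
  (iterateFrobenius F 2 s).eqLocusField (RingHom.id F)

variable {s} in
lemma mem_frobFixed {x : F} : x ∈ frobFixed F s ↔ x ^ 2 ^ s = x := by
  simp [frobFixed, iterateFrobenius_def]

lemma pow_two_pow_two_mul_of_mem {c : F} (hc : c ∈ frobFixed F s) : c ^ 2 ^ (2 * s) = c := by
  rw [two_mul, pow_add, pow_mul, mem_frobFixed.mp hc, mem_frobFixed.mp hc]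

lemma trFE_add (x y : F) : trFE s (x + y) = trFE s x + trFE s y := by
  simp only [trFE, add_pow_char_pow]
  ring

lemma trFE_mul_of_mem {c : F} (hc : c ∈ frobFixed F s) (x : F) :
    trFE s (c * x) = c * trFE s x := by
  simp only [trFE, mul_pow, mem_frobFixed.mp hc, pow_two_pow_two_mul_of_mem s hc]
  ring

lemma trFE_sq (x : F) : trFE s (x ^ 2) = trFE s x ^ 2 := by
  simp only [trFE, add_pow_char, ← pow_mul, mul_comm 2]

lemma trFE_mul_eq_zero_iff {c : F} (hc : c ∈ frobFixed F s) (hc0 : c ≠ 0) (x : F) :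
    trFE s (c * x) = 0 ↔ trFE s x = 0 := by
  rw [trFE_mul_of_mem s hc, mul_eq_zero, or_iff_right hc0]

def trFELinear : F →ₗ[frobFixed F s] F where
  toFun := trFE s
  map_add' := trFE_add s
  map_smul' c x := trFE_mul_of_mem s c.2 x

lemma trFE_zero : trFE s (0 : F) = 0 := map_zero (trFELinear s)

lemma trFE_sub (x y : F) : trFE s (x - y) = trFE s x - trFE s y := map_sub (trFELinear s) x y

variable {s}

lemma natCard_frobFixed_le (hs : 1 ≤ s) : Nat.card (frobFixed F s) ≤ 2 ^ s := by
  have h1 : 1 < 2 ^ s := Nat.one_lt_two_pow (by omega)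
  calc Nat.card (frobFixed F s) = (frobFixed F s : Set F).ncard := Nat.card_coe_set_eq _
    _ ≤ (X ^ 2 ^ s - X : F[X]).natDegree :=
        ncard_le_natDegree (FiniteField.X_pow_card_sub_X_ne_zero F h1)
          (fun x hx => by simp [mem_frobFixed.mp hx])
    _ = 2 ^ s := FiniteField.X_pow_card_sub_X_natDegree_eq F h1

lemma natCard_ker_trFELinear_le (hs : 1 ≤ s) :
    Nat.card (LinearMap.ker (trFELinear s : F →ₗ[frobFixed F s] F)) ≤ 2 ^ (2 * s) := by
  have h1 : 1 < 2 ^ s := Nat.one_lt_two_pow (by omega)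
  have h2 : 2 ^ s < 2 ^ (2 * s) := Nat.pow_lt_pow_right (by norm_num) (by omega)
  have hdeg₁ : (X + X ^ 2 ^ s : F[X]).natDegree = 2 ^ s := by
    rw [natDegree_add_eq_right_of_natDegree_lt] <;> simp [h1]
  have hdeg : (X + X ^ 2 ^ s + X ^ 2 ^ (2 * s) : F[X]).natDegree = 2 ^ (2 * s) := by
    rw [natDegree_add_eq_right_of_natDegree_lt] <;> simp [hdeg₁, h2]
  have hne : (X + X ^ 2 ^ s + X ^ 2 ^ (2 * s) : F[X]) ≠ 0 :=
    ne_zero_of_natDegree_gt (hdeg ▸ h1.trans h2)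
  calc Nat.card (LinearMap.ker (trFELinear s : F →ₗ[frobFixed F s] F))
      = ((LinearMap.ker (trFELinear s : F →ₗ[frobFixed F s] F)) : Set F).ncard :=
        Nat.card_coe_set_eq _
    _ ≤ _ := ncard_le_natDegree hne (fun x hx => by simpa [trFELinear, trFE] using hx)
    _ = 2 ^ (2 * s) := hdeg

variable [Fintype F] (hF : Fintype.card F = 2 ^ (3 * s))
include hF

lemma trFE_mem (x : F) : trFE s x ∈ frobFixed F s := by
  have hx : x ^ 2 ^ (3 * s) = x := hF ▸ FiniteField.pow_card x
  rw [mem_frobFixed]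
  simp only [trFE, add_pow_char_pow, ← pow_mul, ← pow_add]
  rw [← two_mul, show 2 * s + s = 3 * s by ring, hx]
  ring

theorem natCard_frobFixed_and_ker (hs : 1 ≤ s) :
    Nat.card (frobFixed F s) = 2 ^ s ∧
      Nat.card (LinearMap.ker (trFELinear s : F →ₗ[frobFixed F s] F)) = 2 ^ (2 * s) := by
  set f := (trFELinear s : F →ₗ[frobFixed F s] F).toAddMonoidHom
  have hprod : Nat.card f.ker * Nat.card f.range = 2 ^ (3 * s) := by
    rw [← AddSubgroup.index_ker, f.ker.card_mul_index, Nat.card_eq_fintype_card, hF]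
  have hrange : Nat.card f.range ≤ Nat.card (frobFixed F s) :=
    Nat.card_mono (Set.toFinite _) (by rintro _ ⟨x, rfl⟩; exact trFE_mem hF x)
  have hE := natCard_frobFixed_le (F := F) hs
  have hK := natCard_ker_trFELinear_le (F := F) hs
  change Nat.card f.ker ≤ _ at hK
  rw [show 2 ^ (3 * s) = (2 ^ s) ^ 3 by ring] at hprod
  rw [show 2 ^ (2 * s) = (2 ^ s) ^ 2 by ring] at hK ⊢
  have hq : 0 < 2 ^ s := by positivity
  constructor
  · nlinarith
  · change Nat.card f.ker = _
    nlinarith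

lemma finrank_eq_of_natCard (hs : 1 ≤ s) {V : Type*} [AddCommGroup V] [Module (frobFixed F s) V]
    [Module.Finite (frobFixed F s) V] {n : ℕ} (hV : Nat.card V = (2 ^ s) ^ n) :
    Module.finrank (frobFixed F s) V = n := by
  refine Nat.pow_right_injective (le_self_pow₀ one_le_two (by omega : s ≠ 0)) ?_
  dsimp only
  rw [← hV, Module.natCard_eq_pow_finrank (K := frobFixed F s),
    (natCard_frobFixed_and_ker hF hs).1]

lemma finrank_frobFixed (hs : 1 ≤ s) : Module.finrank (frobFixed F s) F = 3 :=
  finrank_eq_of_natCard hF hs (by rw [Nat.card_eq_fintype_card, hF]; ring)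

lemma finrank_ker_trFELinear (hs : 1 ≤ s) :
    Module.finrank (frobFixed F s) (LinearMap.ker (trFELinear s : F →ₗ[frobFixed F s] F)) = 2 :=
  finrank_eq_of_natCard hF hs (by rw [(natCard_frobFixed_and_ker hF hs).2]; ring)

lemma exists_trFE_eq_one (hs : 1 ≤ s) : ∃ x : F, trFE s x = 1 := by
  obtain ⟨x, hx⟩ : ∃ x : F, trFE s x ≠ 0 := by
    by_contra! h
    have hcard := (natCard_frobFixed_and_ker hF hs).2
    rw [LinearMap.ker_eq_top.mpr (LinearMap.ext h), Nat.card_congr Submodule.topEquiv.toEquiv,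
      Nat.card_eq_fintype_card, hF] at hcard
    have := Nat.pow_right_injective le_rfl hcard
    omega
  refine ⟨(trFE s x)⁻¹ * x, ?_⟩
  rw [trFE_mul_of_mem s (inv_mem (trFE_mem hF x)), inv_mul_cancel₀ hx]

lemma mem_frobFixed_of_forall_trFE_mul (hs : 1 ≤ s) {z : F}
    (hz : ∀ x, trFE s x = 0 → trFE s (z * x) = 0) : z ∈ frobFixed F s := by
  obtain ⟨x₁, hx₁⟩ := exists_trFE_eq_one hF hs
  set l := trFE s (z * x₁)
  -- `x - Tr(x) x₁` lies in the kernel of the trace, so `Tr(z x) = l Tr(x)`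
  have hl : ∀ x, trFE s ((z - l) * x) = 0 := by
    intro x
    have hker := hz (x - trFE s x * x₁) (by
      rw [trFE_sub, trFE_mul_of_mem s (trFE_mem hF x), hx₁, mul_one, sub_self])
    rw [mul_sub, mul_left_comm, trFE_sub, trFE_mul_of_mem s (trFE_mem hF x), sub_eq_zero] at hker
    rw [sub_mul, trFE_sub, trFE_mul_of_mem s (trFE_mem hF _), hker, mul_comm, sub_self]
  by_contra hzE
  have hzl : z - l ≠ 0 := sub_ne_zero.mpr fun h => hzE (h ▸ trFE_mem hF _)
  have := hl ((z - l)⁻¹ * x₁)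
  rw [mul_inv_cancel_left₀ hzl, hx₁] at this
  exact one_ne_zero this

lemma card_filter_trFE_eq_zero [DecidableEq F] (hs : 1 ≤ s) :
    #{x : F | trFE s x = 0} = 2 ^ (2 * s) := by
  rw [← (natCard_frobFixed_and_ker hF hs).2, ← Fintype.card_subtype,
    ← Nat.card_eq_fintype_card]
  rfl

theorem card_filter_trFE_eq_zero_and_trFE_mul_eq_zero [DecidableEq F] (hs : 1 ≤ s) {z : F}
    (hz : z ∉ frobFixed F s) :
    #{x : F | trFE s x = 0 ∧ trFE s (z * x) = 0} = 2 ^ s := by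
  set K₁ := LinearMap.ker (trFELinear s : F →ₗ[frobFixed F s] F)
  set K_z := LinearMap.ker ((trFELinear s).comp (LinearMap.mulLeft (frobFixed F s) z))
  have hz0 : z ≠ 0 := fun h => hz (h ▸ zero_mem _)
  have h₁ : Module.finrank (frobFixed F s) K₁ = 2 := finrank_ker_trFELinear hF hs
  have h_z : Module.finrank (frobFixed F s) K_z = 2 := by
    refine finrank_eq_of_natCard hF hs ?_
    rw [← pow_mul, mul_comm, ← (natCard_frobFixed_and_ker hF hs).2]
    exact Nat.card_congr ((Equiv.mulLeft₀ z hz0).subtypeEquiv fun x => Iff.rfl)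
  have hsup : Module.finrank (frobFixed F s) ↥(K₁ ⊔ K_z) = 3 := by
    refine le_antisymm ((Submodule.finrank_le _).trans (finrank_frobFixed hF hs).le) ?_
    by_contra! hlt
    have h1 : K₁ = K₁ ⊔ K_z := Submodule.eq_of_le_of_finrank_le le_sup_left (by omega)
    have h2 : K_z = K₁ := Submodule.eq_of_le_of_finrank_eq (h1 ▸ le_sup_right) (by omega)
    exact hz (mem_frobFixed_of_forall_trFE_mul hF hs fun x hx => h2.ge hx)
  have hinf : Module.finrank (frobFixed F s) ↥(K₁ ⊓ K_z) = 1 := by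
    have := Submodule.finrank_sup_add_finrank_inf_eq K₁ K_z
    omega
  rw [← Fintype.card_subtype, ← Nat.card_eq_fintype_card, ← pow_one (2 ^ s), ← hinf,
    ← (natCard_frobFixed_and_ker hF hs).1, ← Module.natCard_eq_pow_finrank]
  rfl

end RelativeTrace

lemma card_filter_natCast_range_mul (M k : ℕ) [NeZero M] (p : ZMod M → Prop) [DecidablePred p] :
    #{n ∈ range (M * k) | p ((n : ℕ) : ZMod M)} = k * #{c | p c} := by
  have hM : 0 < M := Nat.pos_of_neZero M
  calc #{n ∈ range (M * k) | p ((n : ℕ) : ZMod M)} = #((univ.filter p) ×ˢ range k) := by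
        refine card_nbij' (fun n => ((n : ZMod M), n / M)) (fun x => x.1.val + M * x.2)
          ?_ ?_ ?_ ?_
        · intro n hn
          simp only [mem_coe, mem_filter, mem_range, mem_product, mem_univ, true_and] at hn ⊢
          exact ⟨hn.2, Nat.div_lt_of_lt_mul hn.1⟩
        · rintro ⟨c, j⟩ h
          simp only [mem_coe, mem_filter, mem_range, mem_product, mem_univ, true_and] at h ⊢
          simp only [Nat.cast_add, Nat.cast_mul, ZMod.natCast_val, ZMod.cast_id', id,
            ZMod.natCast_self, zero_mul, add_zero]
          refine ⟨?_, h.1⟩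
          have := c.val_lt
          nlinarith
        · intro n _
          simp [Nat.mod_add_div]
        · rintro ⟨c, j⟩ _
          simp only [Nat.cast_add, Nat.cast_mul, ZMod.natCast_val, ZMod.cast_id', id,
            ZMod.natCast_self, zero_mul, add_zero, Prod.mk.injEq, true_and]
          rw [Nat.add_mul_div_left _ _ hM, Nat.div_eq_of_lt c.val_lt, zero_add]
    _ = k * #{c | p c} := by rw [card_product, card_range, mul_comm]

lemma isPrimitiveRoot_of_forall_eq_pow {K : Type*} [Field K] [Fintype K] {ω : K}
    (hK : 2 < Fintype.card K) (hω : ∀ x ≠ 0, ∃ n : ℕ, x = ω ^ n) :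
    IsPrimitiveRoot ω (Fintype.card K - 1) := by
  classical
  have hω0 : ω ≠ 0 := by
    rintro rfl
    have hsub : (univ : Finset K) ⊆ {0, 1} := fun x _ => by
      obtain rfl | hx := eq_or_ne x 0
      · simp
      obtain ⟨n, rfl⟩ := hω x hx
      cases n <;> simp_all
    have := (card_le_card hsub).trans card_le_two
    rw [card_univ] at this
    omega
  rw [IsPrimitiveRoot.iff_orderOf, ← Fintype.card_units, ← Nat.card_eq_fintype_card,
    ← Units.val_mk0 hω0, orderOf_units]
  refine orderOf_eq_card_of_forall_mem_powers fun u => ?_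
  obtain ⟨n, hn⟩ := hω u u.ne_zero
  exact ⟨n, Units.ext (by simp [hn])⟩

lemma IsPrimitiveRoot.card_filter_ne_zero_and {K : Type*} [Field K] [Fintype K] [DecidableEq K]
    {ω : K} (hω : IsPrimitiveRoot ω (Fintype.card K - 1)) (P : K → Prop) [DecidablePred P] :
    #{u | u ≠ 0 ∧ P u} = #{n ∈ range (Fintype.card K - 1) | P (ω ^ n)} := by
  have hN : Fintype.card K - 1 ≠ 0 := by have := Fintype.one_lt_card (α := K); omega
  have : NeZero (Fintype.card K - 1) := ⟨hN⟩
  symm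
  refine card_nbij (ω ^ ·) ?_ ?_ ?_
  · intro n hn
    simp only [mem_coe, mem_filter, mem_range, mem_univ, true_and] at hn ⊢
    exact ⟨pow_ne_zero _ (hω.isUnit hN).ne_zero, hn.2⟩
  · intro i hi j hj h
    simp only [mem_coe, mem_filter, mem_range] at hi hj
    exact hω.pow_inj hi.1 hj.1 h
  · intro u hu
    simp only [mem_coe, mem_filter, mem_univ, true_and] at hu
    obtain ⟨n, hn, rfl⟩ := hω.eq_pow_of_pow_eq_one (FiniteField.pow_card_sub_one_eq_one u hu.1)
    exact ⟨n, by simpa [hn] using hu.2, rfl⟩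

lemma card_filter_ne_zero_and_of_zero {K : Type*} [Zero K] [Fintype K] [DecidableEq K]
    (P : K → Prop) [DecidablePred P] (h0 : P 0) : #{u | u ≠ 0 ∧ P u} = #{u | P u} - 1 := by
  rw [← card_erase_of_mem (by simpa using h0)]
  congr 1
  ext
  simp [and_comm]

lemma Mof_mul_two_pow_sub_one (s : ℕ) : Mof s * (2 ^ s - 1) = 2 ^ (3 * s) - 1 := by
  have h1 : 1 ≤ 2 ^ s := Nat.one_le_two_pow
  have h3 : 1 ≤ 2 ^ (3 * s) := Nat.one_le_two_pow
  zify [h1, h3]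
  ring

lemma exists_add_self_eq {s : ℕ} (hs : 1 ≤ s) (x : ZMod (Mof s)) : ∃ y, y + y = x := by
  have hodd : Odd (Mof s) := by
    have h1 : Even (2 ^ s) := (Nat.even_pow' (by omega)).mpr even_two
    have h2 : Even (2 ^ (2 * s)) := (Nat.even_pow' (by omega)).mpr even_two
    exact (h2.add h1).add_one
  have h2 : IsUnit (2 : ZMod (Mof s)) := by
    exact_mod_cast (ZMod.isUnit_iff_coprime 2 (Mof s)).mpr (Nat.coprime_two_left.mpr hodd)
  exact ⟨h2.unit⁻¹ * x, by rw [← two_mul, ← mul_assoc, IsUnit.mul_val_inv, one_mul]⟩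

section ScalingInvariant

variable {F : Type*} [Field F] [Fintype F] [CharP F 2] {s : ℕ}
  (hF : Fintype.card F = 2 ^ (3 * s)) {ω : F} (hω : IsPrimitiveRoot ω (Fintype.card F - 1))
include hF hω

lemma pow_Mof_mem_frobFixed : ω ^ Mof s ∈ frobFixed F s := by
  have h : Mof s * 2 ^ s = Mof s + (Fintype.card F - 1) := by
    rw [hF, ← Mof_mul_two_pow_sub_one, ← mul_one_add, Nat.add_sub_cancel' Nat.one_le_two_pow]
  rw [mem_frobFixed, ← pow_mul, h, pow_add, hω.pow_eq_one, mul_one]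

lemma pow_val_notMem_frobFixed (hs : 1 ≤ s) {v : ZMod (Mof s)} (hv : v ≠ 0) :
    ω ^ v.val ∉ frobFixed F s := by
  intro h
  have hq : 2 ^ s ≠ 0 := by positivity
  have h1 : (ω ^ v.val) ^ (2 ^ s - 1) = 1 := by
    have h0 : ω ^ v.val ≠ 0 :=
      pow_ne_zero _ (hω.ne_zero (by have := Fintype.one_lt_card (α := F); omega))
    rw [mem_frobFixed, ← pow_sub_one_mul hq, mul_eq_right₀ h0] at h
    exact h
  rw [← pow_mul, hω.pow_eq_one_iff_dvd, hF, ← Mof_mul_two_pow_sub_one,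
    Nat.mul_dvd_mul_iff_right (Nat.sub_pos_of_lt (Nat.one_lt_two_pow (by omega)))] at h1
  exact hv ((ZMod.val_eq_zero v).mp (Nat.eq_zero_of_dvd_of_lt h1 v.val_lt))

variable (P : F → Prop) (hP : ∀ c ∈ frobFixed F s, c ≠ 0 → ∀ u, P (c * u) ↔ P u)
include hP

lemma iff_pow_natCast_val (n : ℕ) : P (ω ^ (n : ZMod (Mof s)).val) ↔ P (ω ^ n) := by
  have hω0 : ω ≠ 0 := hω.ne_zero (by have := Fintype.one_lt_card (α := F); omega)
  rw [ZMod.val_natCast]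
  conv_rhs => rw [← Nat.mod_add_div n (Mof s), pow_add, pow_mul, mul_comm]
  exact (hP _ (pow_mem (pow_Mof_mem_frobFixed hF hω) _)
    (pow_ne_zero _ (pow_ne_zero _ hω0)) _).symm

theorem card_filter_ne_zero_and_eq_mul [DecidableEq F] [DecidablePred P] :
    #{u | u ≠ 0 ∧ P u} = (2 ^ s - 1) * #{c : ZMod (Mof s) | P (ω ^ c.val)} := by
  rw [hω.card_filter_ne_zero_and, hF, ← Mof_mul_two_pow_sub_one,
    ← card_filter_natCast_range_mul]
  exact congrArg card (filter_congr fun n _ => (iff_pow_natCast_val hF hω P hP n).symm)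

end ScalingInvariant

def singerSet {F : Type*} [Field F] [DecidableEq F] (s : ℕ) (ω : F) : Finset (ZMod (Mof s)) :=
  {c | trFE s (ω ^ c.val) = 0}

section SingerSet

variable {F : Type*} [Field F] [Fintype F] [DecidableEq F] [CharP F 2] {s : ℕ}
  (hF : Fintype.card F = 2 ^ (3 * s)) {ω : F} (hω : IsPrimitiveRoot ω (Fintype.card F - 1))
include hF hω

lemma trFE_pow_eq_zero_iff (n : ℕ) :
    trFE s (ω ^ n) = 0 ↔ (n : ZMod (Mof s)) ∈ singerSet s ω := by
  simp only [singerSet, mem_filter, mem_univ, true_and]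
  exact (iff_pow_natCast_val hF hω (fun u => trFE s u = 0)
    (fun c hc hc0 u => trFE_mul_eq_zero_iff s hc hc0 u) n).symm

lemma add_self_mem_singerSet_iff (c : ZMod (Mof s)) :
    c + c ∈ singerSet s ω ↔ c ∈ singerSet s ω := by
  have h : c + c = ((c.val * 2 : ℕ) : ZMod (Mof s)) := by
    rw [Nat.cast_mul, ZMod.natCast_zmod_val]
    ring
  rw [h, ← trFE_pow_eq_zero_iff hF hω, pow_mul, trFE_sq, pow_eq_zero_iff two_ne_zero, singerSet,
    mem_filter]
  simp

lemma two_pow_mul_mem_singerSet_iff (k : ℕ) (c : ZMod (Mof s)) :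
    2 ^ k * c ∈ singerSet s ω ↔ c ∈ singerSet s ω := by
  induction k with
  | zero => simp
  | succ k ih => rw [pow_succ', mul_assoc, two_mul, add_self_mem_singerSet_iff hF hω, ih]

lemma card_singerSet (hs : 1 ≤ s) : #(singerSet s ω) = 2 ^ s + 1 := by
  have h := card_filter_ne_zero_and_eq_mul hF hω (fun u => trFE s u = 0)
    fun c hc hc0 u => trFE_mul_eq_zero_iff s hc hc0 u
  rw [card_filter_ne_zero_and_of_zero (fun u : F => trFE s u = 0) (trFE_zero s),
    card_filter_trFE_eq_zero hF hs] at h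
  have hfac : 2 ^ (2 * s) - 1 = (2 ^ s - 1) * (2 ^ s + 1) := by
    have h1 : 1 ≤ 2 ^ s := Nat.one_le_two_pow
    have h2 : 1 ≤ 2 ^ (2 * s) := Nat.one_le_two_pow
    zify [h1, h2]
    ring
  rw [hfac] at h
  have hq : 0 < 2 ^ s - 1 := Nat.sub_pos_of_lt (Nat.one_lt_two_pow (by omega))
  exact (Nat.eq_of_mul_eq_mul_left hq h).symm

lemma isPlanarDifferenceSet_singerSet (hs : 1 ≤ s) : IsPlanarDifferenceSet (singerSet s ω) := by
  intro v hv
  have h := card_filter_ne_zero_and_eq_mul hF hω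
    (fun u => trFE s u = 0 ∧ trFE s (ω ^ v.val * u) = 0)
    fun c hc hc0 u => by simp only [mul_left_comm _ c, trFE_mul_eq_zero_iff s hc hc0]
  rw [card_filter_ne_zero_and_of_zero (fun u : F => trFE s u = 0 ∧ trFE s (ω ^ v.val * u) = 0)
      ⟨trFE_zero s, by rw [mul_zero, trFE_zero]⟩,
    card_filter_trFE_eq_zero_and_trFE_mul_eq_zero hF hs (pow_val_notMem_frobFixed hF hω hs hv)]
    at h
  have hD : #{c : ZMod (Mof s) | trFE s (ω ^ c.val) = 0 ∧ trFE s (ω ^ v.val * ω ^ c.val) = 0} =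
      #{d ∈ singerSet s ω | v + d ∈ singerSet s ω} := by
    congr 1
    ext c
    simp only [mem_filter, mem_univ, true_and, ← pow_add]
    rw [trFE_pow_eq_zero_iff hF hω c.val, trFE_pow_eq_zero_iff hF hω, Nat.cast_add,
      ZMod.natCast_zmod_val, ZMod.natCast_zmod_val]
  rw [hD] at h
  have hq : 0 < 2 ^ s - 1 := Nat.sub_pos_of_lt (Nat.one_lt_two_pow (by omega))
  exact (Nat.eq_of_mul_eq_mul_left hq ((mul_one _).trans h)).symm

lemma ncard_Sa (x : ZMod (Mof s)) :
    (Sa s ω (x.val : ℤ)).ncard = (2 ^ s - 1) * sumRep (singerSet s ω) x := by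
  have hSa : Sa s ω (x.val : ℤ) = ↑({u | u ≠ 0 ∧
      (trFE s (u ^ (2 ^ s + 1)) = 0 ∧ trFE s (ω ^ x.val * u) = 0)} : Finset F) := by
    ext u
    simp [Sa, -ZMod.natCast_val]
  rw [hSa, Set.ncard_coe_finset, card_filter_ne_zero_and_eq_mul hF hω _ fun c hc hc0 u => by
    rw [mul_pow, trFE_mul_eq_zero_iff s (pow_mem hc _) (pow_ne_zero _ hc0), mul_left_comm,
      trFE_mul_eq_zero_iff s hc hc0]]
  congr 1
  have hpow : ∀ c : ZMod (Mof s),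
      trFE s ((ω ^ c.val) ^ (2 ^ s + 1)) = 0 ↔ -c ∈ singerSet s ω := by
    intro c
    have hM : ((Mof s : ℕ) : ZMod (Mof s)) = 0 := ZMod.natCast_self _
    have h : c * ((2 ^ s + 1 : ℕ) : ZMod (Mof s)) = 2 ^ (2 * s) * -c := by
      push_cast at hM ⊢
      linear_combination c * hM
    rw [← pow_mul, trFE_pow_eq_zero_iff hF hω, Nat.cast_mul, ZMod.natCast_zmod_val, h,
      two_pow_mul_mem_singerSet_iff hF hω]
  have hmul : ∀ c : ZMod (Mof s),
      trFE s (ω ^ x.val * ω ^ c.val) = 0 ↔ x + c ∈ singerSet s ω := by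
    intro c
    rw [← pow_add, trFE_pow_eq_zero_iff hF hω, Nat.cast_add, ZMod.natCast_zmod_val,
      ZMod.natCast_zmod_val]
  simp only [hpow, hmul]
  refine card_nbij' (fun c => -c) (fun d => -d) (fun c hc => ?_) (fun d hd => ?_)
    (fun c _ => neg_neg c) (fun d _ => neg_neg d) <;> simp_all [sub_eq_add_neg]

lemma setOf_ncard_Sa_eq_mul (hs : 1 ≤ s) (k : ℕ) :
    {x : ZMod (Mof s) | (Sa s ω x.val).ncard = (2 ^ s - 1) * k} =
      {x | sumRep (singerSet s ω) x = k} := by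
  ext x
  rw [Set.mem_ofPred_eq, Set.mem_ofPred_eq, ncard_Sa hF hω x,
    Nat.mul_right_inj (Nat.sub_pos_of_lt (Nat.one_lt_two_pow (by omega))).ne']

lemma T1_eq (hs : 1 ≤ s) : T1 s ω = ↑(singerSet s ω) := by
  ext x
  rw [T1, ← mul_one (2 ^ s - 1), setOf_ncard_Sa_eq_mul hF hω hs, Set.mem_ofPred_eq, mem_coe,
    (isPlanarDifferenceSet_singerSet hF hω hs).sumRep_eq_one_iff_mem
      (add_self_mem_singerSet_iff hF hω) (exists_add_self_eq hs)]

lemma T2_eq (hs : 1 ≤ s) : T2 s ω = {x | sumRep (singerSet s ω) x = 2} := by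
  rw [T2, mul_comm, setOf_ncard_Sa_eq_mul hF hω hs]

lemma T3_eq (hs : 1 ≤ s) : T3 s ω = {x | sumRep (singerSet s ω) x = 0} := by
  rw [T3, ← setOf_ncard_Sa_eq_mul hF hω hs, mul_zero]

end SingerSet

lemma ncard_setOf_pair_sub_eq {G : Type*} [AddGroup G] [Fintype G] (A B : Set G)
    [DecidablePred (· ∈ A)] [DecidablePred (· ∈ B)] (a : G) :
    {p : G × G | p.1 ∈ A ∧ p.2 ∈ B ∧ p.1 - p.2 = a}.ncard =
      #{x | x ∈ B ∧ a + x ∈ A} := by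
  have h : {p : G × G | p.1 ∈ A ∧ p.2 ∈ B ∧ p.1 - p.2 = a} =
      (fun x => (a + x, x)) '' ↑({x | x ∈ B ∧ a + x ∈ A} : Finset G) := by
    ext ⟨y, x⟩
    simp only [coe_filter, mem_univ, true_and, Set.mem_ofPred_eq, Set.mem_image, Prod.mk.injEq]
    constructor
    · rintro ⟨hy, hx, rfl⟩
      exact ⟨x, ⟨hx, by rwa [sub_add_cancel]⟩, sub_add_cancel y x, rfl⟩
    · rintro ⟨x, ⟨hx, hax⟩, rfl, rfl⟩
      exact ⟨hax, hx, add_sub_cancel_right a x⟩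
  rw [h, Set.ncard_image_of_injective _ fun x y h => (Prod.ext_iff.mp h).2, Set.ncard_coe_finset]

theorem statement8 (s : ℕ) (hs : 1 ≤ s) (F : Type*) [Field F] [Fintype F]
    (hF : Fintype.card F = 2 ^ (3 * s)) (ω : F)
    (hω : ∀ x : F, x ≠ 0 → ∃ n : ℕ, x = ω ^ n) :
    ∀ a : ZMod (Mof s),
      (({p : ZMod (Mof s) × ZMod (Mof s) | p.1 ∈ T2 s ω ∧ p.2 ∈ T2 s ω ∧ p.1 - p.2 = a}.ncard : ℤ) -
       ({p : ZMod (Mof s) × ZMod (Mof s) | p.1 ∈ T3 s ω ∧ p.2 ∈ T2 s ω ∧ p.1 - p.2 = a}.ncard : ℤ)) =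
        2 ^ (2 * s - 1) * Ind (a = 0) + 2 ^ (s - 1) * (1 - Ind (a ∈ T1 s ω)) := by
  classical
  intro a
  have : CharP F 2 := charP_of_card_eq_prime_pow hF
  have hcard : 2 < Fintype.card F := by
    rw [hF]
    exact Nat.lt_of_lt_of_le (by norm_num) (Nat.pow_le_pow_right two_pos (by omega : 3 ≤ 3 * s))
  have hω' := isPrimitiveRoot_of_forall_eq_pow hcard hω
  have key := (isPlanarDifferenceSet_singerSet hF hω' hs).two_mul_card_sub_card
    (card_singerSet hF hω' hs) (add_self_mem_singerSet_iff hF hω') (exists_add_self_eq hs) a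
  have hq : (2 : ℤ) ^ s = 2 * 2 ^ (s - 1) := by
    rw [← pow_succ', Nat.sub_add_cancel hs]
  have hq2 : ((2 : ℤ) ^ s) ^ 2 = 2 * 2 ^ (2 * s - 1) := by
    rw [← pow_mul, ← pow_succ', mul_comm, Nat.sub_add_cancel (by omega)]
  rw [T1_eq hF hω' hs, T2_eq hF hω' hs, T3_eq hF hω' hs, ncard_setOf_pair_sub_eq,
    ncard_setOf_pair_sub_eq]
  simp only [Set.mem_ofPred_eq, mem_coe]
  push_cast at key
  unfold Ind
  split_ifs at key ⊢ <;> linarith
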